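/- Let N ≥ 5 be an integer, set 2* = 2N/(N−2), and let Ω ⊂ ℝ^N be a bounded measurable set. Then there exists a constant C > 0 such that for every ε ∈ (0,1], every y ∈ ℝ^N and every measurable w : Ω → ℝ with ∫_Ω |w|^{2*} < ∞, one has |∫_Ω U_{ε,y}(x)^{N/(N−2)} · w(x) dx| ≤ C · ε · (∫_Ω |w|^{2*})^{1/2*}. -/

import Mathlib

open Real MeasureTheory

/-- The Talenti instanton `U(x) = (N(N−2)/(N(N−2)+|x|²))^((N−2)/2)` on `ℝ^N`. -/
noncomputable def talenti (N : ℕ) (x : EuclideanSpace ℝ (Fin N)) : ℝ :=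
  ((N : ℝ) * ((N : ℝ) - 2) / ((N : ℝ) * ((N : ℝ) - 2) + ‖x‖ ^ 2)) ^ (((N : ℝ) - 2) / 2)

/-- The rescaled instanton `U_{ε,y}(x) = ε^(−(N−2)/2)·U((x−y)/ε)`. -/
noncomputable def talentiRescaled (N : ℕ) (ε : ℝ) (y x : EuclideanSpace ℝ (Fin N)) : ℝ :=
  ε ^ (-(((N : ℝ) - 2) / 2)) * talenti N (ε⁻¹ • (x - y))

/-!
Hölder's inequality with the exponent `p = 2N/(N+2)` conjugate to `2* = 2N/(N-2)` bounds the
integral by `‖U_{ε,y}^{N/(N-2)}‖_p · ‖w‖_{2*}`, where the first norm may be taken over all of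
`ℝ^N`. Since `U^{N/(N-2)·p}` decays like `|x|^{-2N²/(N+2)}` and `2N²/(N+2) > N`, this norm is
finite, and the change of variables `x = y + ε z` shows that it equals exactly `ε ‖U^{N/(N-2)}‖_p`.
-/

theorem abs_integral_mul_le_Lp_mul_Lq {α : Type*} [MeasurableSpace α] {μ : Measure α}
    {p q : ℝ} (hpq : p.HolderConjugate q) {f g : α → ℝ}
    (hf : AEStronglyMeasurable f μ) (hg : AEStronglyMeasurable g μ)
    (hfp : Integrable (fun x => |f x| ^ p) μ) (hgq : Integrable (fun x => |g x| ^ q) μ) :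
    |∫ x, f x * g x ∂μ| ≤ (∫ x, |f x| ^ p ∂μ) ^ (1 / p) * (∫ x, |g x| ^ q ∂μ) ^ (1 / q) := by
  have memLp_of {h : α → ℝ} {r : ℝ} (hr : 0 < r) (hh : AEStronglyMeasurable h μ)
      (hhr : Integrable (fun x => |h x| ^ r) μ) : MemLp h (ENNReal.ofReal r) μ :=
    (integrable_norm_rpow_iff hh (by simpa using hr) ENNReal.ofReal_ne_top).1
      (by simpa [ENNReal.toReal_ofReal hr.le] using hhr)
  calc |∫ x, f x * g x ∂μ| ≤ ∫ x, ‖f x‖ * ‖g x‖ ∂μ := by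
        rw [← Real.norm_eq_abs]
        simpa only [norm_mul] using norm_integral_le_integral_norm (fun x => f x * g x)
    _ ≤ _ := integral_mul_norm_le_Lp_mul_Lq hpq (memLp_of hpq.pos hf hfp)
        (memLp_of hpq.symm.pos hg hgq)

theorem Real.holderConjugate_two_mul_div {n : ℝ} (hn : 2 < n) :
    (2 * n / (n + 2)).HolderConjugate (2 * n / (n - 2)) := by
  have : n - 2 ≠ 0 := by linarith
  rw [Real.holderConjugate_iff, lt_div_iff₀ (by linarith)]
  refine ⟨by linarith, ?_⟩
  field_simp
  ring

section HaarMeasure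

variable {E : Type*} [NormedAddCommGroup E] [NormedSpace ℝ E] [FiniteDimensional ℝ E]
  [MeasurableSpace E] [BorelSpace E] (μ : Measure E) [μ.IsAddHaarMeasure]

theorem integrable_div_add_norm_sq_rpow {a β : ℝ} (ha : 0 < a)
    (hβ : (Module.finrank ℝ E : ℝ) < 2 * β) :
    Integrable (fun x : E => (a / (a + ‖x‖ ^ 2)) ^ β) μ := by
  have hβ0 : 0 ≤ β := by linarith [(Module.finrank ℝ E).cast_nonneg (α := ℝ)]
  refine ((integrable_rpow_neg_one_add_norm_sq (μ := μ) hβ).const_mul ((a + 1) ^ β)).mono'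
    (Measurable.aestronglyMeasurable (by fun_prop)) (Filter.Eventually.of_forall fun x => ?_)
  have hbase : a / (a + ‖x‖ ^ 2) ≤ (a + 1) / (1 + ‖x‖ ^ 2) := by
    rw [div_le_div_iff₀ (by positivity) (by positivity)]
    nlinarith [sq_nonneg ‖x‖]
  rw [Real.norm_of_nonneg (by positivity), neg_div, mul_div_cancel_left₀ β two_ne_zero,
    Real.rpow_neg (by positivity), ← div_eq_mul_inv,
    ← Real.div_rpow (by positivity) (by positivity)]
  exact Real.rpow_le_rpow (by positivity) hbase hβ0

theorem MeasureTheory.Integrable.comp_inv_smul_sub {f : E → ℝ} (hf : Integrable f μ) {ε : ℝ}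
    (hε : ε ≠ 0) (y : E) : Integrable (fun x => f (ε⁻¹ • (x - y))) μ :=
  ((integrable_comp_smul_iff μ f (inv_ne_zero hε)).2 hf).comp_sub_right y

theorem integral_comp_inv_smul_sub (f : E → ℝ) {ε : ℝ} (hε : 0 ≤ ε) (y : E) :
    ∫ x, f (ε⁻¹ • (x - y)) ∂μ = ε ^ Module.finrank ℝ E * ∫ x, f x ∂μ := by
  rw [integral_sub_right_eq_self (fun x => f (ε⁻¹ • x)) y,
    Measure.integral_comp_inv_smul_of_nonneg μ f hε, smul_eq_mul]

end HaarMeasure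

section Talenti

variable {N : ℕ}

@[fun_prop]
theorem measurable_talenti : Measurable (talenti N) := by
  unfold talenti; fun_prop

theorem measurable_talentiRescaled (ε : ℝ) (y : EuclideanSpace ℝ (Fin N)) :
    Measurable (talentiRescaled N ε y) := by
  unfold talentiRescaled; fun_prop

theorem talenti_nonneg (hN : 2 ≤ N) (x : EuclideanSpace ℝ (Fin N)) : 0 ≤ talenti N x := by
  have hN' : (2 : ℝ) ≤ N := by exact_mod_cast hN
  unfold talenti
  have : 0 ≤ (N : ℝ) * ((N : ℝ) - 2) := by nlinarith
  positivity

theorem integrable_talenti_rpow (hN : 3 ≤ N) {s : ℝ} (hs : (N : ℝ) < ((N : ℝ) - 2) * s) :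
    Integrable (fun x => talenti N x ^ s) := by
  have hN' : (3 : ℝ) ≤ N := by exact_mod_cast hN
  have ha : 0 < (N : ℝ) * ((N : ℝ) - 2) := by nlinarith
  have hint := integrable_div_add_norm_sq_rpow (volume : Measure (EuclideanSpace ℝ (Fin N))) ha
    (β := ((N : ℝ) - 2) / 2 * s) (by rw [finrank_euclideanSpace_fin]; linarith)
  refine hint.congr (Filter.Eventually.of_forall fun x => ?_)
  simp only [talenti]
  rw [← Real.rpow_mul (by positivity)]

theorem talentiRescaled_nonneg (hN : 2 ≤ N) {ε : ℝ} (hε : 0 ≤ ε)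
    (y x : EuclideanSpace ℝ (Fin N)) : 0 ≤ talentiRescaled N ε y x :=
  mul_nonneg (Real.rpow_nonneg hε _) (talenti_nonneg hN _)

theorem abs_talentiRescaled_rpow_rpow (hN : 2 ≤ N) {ε : ℝ} (hε : 0 ≤ ε)
    (y x : EuclideanSpace ℝ (Fin N)) (r p : ℝ) :
    |talentiRescaled N ε y x ^ r| ^ p = talentiRescaled N ε y x ^ (r * p) := by
  have := talentiRescaled_nonneg hN hε y x
  rw [abs_of_nonneg (by positivity), ← Real.rpow_mul this]

theorem talentiRescaled_rpow (hN : 2 ≤ N) {ε : ℝ} (hε : 0 < ε) (y x : EuclideanSpace ℝ (Fin N))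
    (s : ℝ) : talentiRescaled N ε y x ^ s
      = ε ^ (-(((N : ℝ) - 2) / 2 * s)) * talenti N (ε⁻¹ • (x - y)) ^ s := by
  rw [talentiRescaled, Real.mul_rpow (by positivity) (talenti_nonneg hN _),
    ← Real.rpow_mul hε.le, neg_mul]

theorem integrable_talentiRescaled_rpow (hN : 3 ≤ N) {s : ℝ}
    (hs : (N : ℝ) < ((N : ℝ) - 2) * s) {ε : ℝ} (hε : 0 < ε) (y : EuclideanSpace ℝ (Fin N)) :
    Integrable (fun x => talentiRescaled N ε y x ^ s) := by
  simp only [talentiRescaled_rpow (N := N) (by omega) hε]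
  exact ((integrable_talenti_rpow hN hs).comp_inv_smul_sub volume hε.ne' y).const_mul _

theorem integral_talentiRescaled_rpow (hN : 2 ≤ N) (s : ℝ) {ε : ℝ} (hε : 0 < ε)
    (y : EuclideanSpace ℝ (Fin N)) :
    ∫ x, talentiRescaled N ε y x ^ s
      = ε ^ ((N : ℝ) - ((N : ℝ) - 2) / 2 * s) * ∫ x, talenti N x ^ s := by
  simp only [talentiRescaled_rpow hN hε]
  rw [integral_const_mul, integral_comp_inv_smul_sub volume (fun z => talenti N z ^ s) hε.le,
    finrank_euclideanSpace_fin, ← Real.rpow_natCast, ← mul_assoc, ← Real.rpow_add hε]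
  ring_nf

theorem setIntegral_talentiRescaled_rpow_le (hN : 3 ≤ N) {s : ℝ}
    (hs : (N : ℝ) < ((N : ℝ) - 2) * s) {ε : ℝ} (hε : 0 < ε) (y : EuclideanSpace ℝ (Fin N))
    (Ω : Set (EuclideanSpace ℝ (Fin N))) :
    ∫ x in Ω, talentiRescaled N ε y x ^ s
      ≤ ε ^ ((N : ℝ) - ((N : ℝ) - 2) / 2 * s) * ∫ x, talenti N x ^ s := by
  rw [← integral_talentiRescaled_rpow (by omega) s hε y]
  exact setIntegral_le_integral (integrable_talentiRescaled_rpow hN hs hε y)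
    (.of_forall fun x => Real.rpow_nonneg (talentiRescaled_nonneg (by omega) hε.le y x) s)

end Talenti

theorem stmt_16 (N : ℕ) (hN : 5 ≤ N) (Ω : Set (EuclideanSpace ℝ (Fin N))) :
    ∃ C > (0 : ℝ), ∀ ε ∈ Set.Ioc (0 : ℝ) 1, ∀ y : EuclideanSpace ℝ (Fin N),
      ∀ w : EuclideanSpace ℝ (Fin N) → ℝ, Measurable w →
        Integrable (fun x => |w x| ^ (2 * (N : ℝ) / ((N : ℝ) - 2))) (volume.restrict Ω) →
        |∫ x in Ω, talentiRescaled N ε y x ^ ((N : ℝ) / ((N : ℝ) - 2)) * w x|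
          ≤ C * ε * (∫ x in Ω, |w x| ^ (2 * (N : ℝ) / ((N : ℝ) - 2)))
              ^ (((N : ℝ) - 2) / (2 * (N : ℝ))) := by
  have hN2 : (2 : ℝ) < N := by exact_mod_cast (by omega : 2 < N)
  set r := (N : ℝ) / ((N : ℝ) - 2)
  set q := 2 * (N : ℝ) / ((N : ℝ) - 2)
  set p := 2 * (N : ℝ) / ((N : ℝ) + 2)
  have hpq : p.HolderConjugate q := Real.holderConjugate_two_mul_div hN2
  have hrp : ((N : ℝ) - 2) * (r * p) = N * p := by
    simp only [r]; field_simp [show (N : ℝ) - 2 ≠ 0 by linarith]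
  have hscale : (N : ℝ) - ((N : ℝ) - 2) / 2 * (r * p) = p := by
    rw [div_mul_eq_mul_div, hrp]; simp only [p]; field_simp; ring
  have hdecay : (N : ℝ) < ((N : ℝ) - 2) * (r * p) := by rw [hrp]; nlinarith [hpq.lt]
  set I := ∫ x, talenti N x ^ (r * p)
  have hI : 0 ≤ I := integral_nonneg fun x => Real.rpow_nonneg (talenti_nonneg (by omega) x) _
  refine ⟨I ^ (1 / p) + 1, by positivity, ?_⟩
  rintro ε ⟨hε, -⟩ y w hw hwq
  have hU := fun x => abs_talentiRescaled_rpow_rpow (by omega) hε.le y x r p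
  have hUint : Integrable (fun x => |talentiRescaled N ε y x ^ r| ^ p) := by
    simpa only [hU] using integrable_talentiRescaled_rpow (by omega) hdecay hε y
  have hUnorm : (∫ x in Ω, |talentiRescaled N ε y x ^ r| ^ p) ^ (1 / p) ≤ ε * I ^ (1 / p) := by
    calc _ ≤ (ε ^ p * I) ^ (1 / p) := by
          refine Real.rpow_le_rpow (setIntegral_nonneg_of_ae_restrict
            (.of_forall fun x => by positivity)) ?_ (by positivity)
          simpa only [hU, hscale] using
            setIntegral_talentiRescaled_rpow_le (by omega) hdecay hε y Ω
      _ = ε * I ^ (1 / p) := by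
          rw [Real.mul_rpow (by positivity) hI, ← Real.rpow_mul hε.le,
            mul_one_div_cancel hpq.ne_zero, Real.rpow_one]
  rw [show ((N : ℝ) - 2) / (2 * N) = 1 / q from (one_div_div _ _).symm]
  calc _ ≤ (∫ x in Ω, |talentiRescaled N ε y x ^ r| ^ p) ^ (1 / p)
          * (∫ x in Ω, |w x| ^ q) ^ (1 / q) :=
        abs_integral_mul_le_Lp_mul_Lq hpq
          ((measurable_talentiRescaled ε y).pow_const r).aestronglyMeasurable
          hw.aestronglyMeasurable hUint.restrict hwq
    _ ≤ (I ^ (1 / p) + 1) * ε * (∫ x in Ω, |w x| ^ q) ^ (1 / q) := by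
        gcongr ?_ * _
        linarith
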